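/- log I_n / (n log n) → 1 as n → ∞, where I_n is the number of unlabeled interval graphs on n vertices. -/

import Mathlib

def IsIntervalGraph {n : ℕ} (G : SimpleGraph (Fin n)) : Prop :=
  ∃ a b : Fin n → ℝ, (∀ i, a i ≤ b i) ∧
    ∀ i j, i ≠ j → (G.Adj i j ↔ (Set.Icc (a i) (b i) ∩ Set.Icc (a j) (b j)).Nonempty)

def intervalIsoSetoid (n : ℕ) : Setoid {G : SimpleGraph (Fin n) // IsIntervalGraph G} where
  r G H := Nonempty (G.1 ≃g H.1)
  iseqv := ⟨fun G => ⟨SimpleGraph.Iso.refl⟩,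
    fun ⟨e⟩ => ⟨e.symm⟩, fun ⟨e⟩ ⟨f⟩ => ⟨e.trans f⟩⟩

/-- The number of unlabeled interval graphs on `n` vertices. -/
noncomputable def intervalGraphCount (n : ℕ) : ℕ :=
  Nat.card (Quotient (intervalIsoSetoid n))

/-!
Every interval graph on `n` vertices is realised by endpoints in `{0, …, 2n - 1}`, and relabeling
the vertices permutes the endpoint pairs, so an unlabeled interval graph is determined by a
multiset of `n` pairs: `I_n ≤ C(4n² + n - 1, n) ≤ (5n²)ⁿ / n! ≤ (5en)ⁿ`.

Conversely, fix the `2k` points `0, …, 2k - 1` and add `n - 2k` intervals `[a, k + b]` with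
`a, b < k`. Each interval is recovered from the points it meets, so this gives `k^(2(n - 2k))`
labeled interval graphs, and each unlabeled one has at most `n!` labelings. With `k = ⌈n / log n⌉`,
`log I_n ≥ 2(n - 2k) log k - n log n = n log n - O(n log log n)`.
-/

open Function Real Filter Topology
open scoped Nat

def intervalGraph {V α : Type*} [LinearOrder α] (a b : V → α) : SimpleGraph V where
  Adj i j := i ≠ j ∧ a i ≤ b j ∧ a j ≤ b i
  symm := ⟨fun _ _ h => ⟨h.1.symm, h.2.2, h.2.1⟩⟩
  loopless := ⟨fun _ h => h.1 rfl⟩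

section IntervalGraph

variable {V W α β : Type*} [LinearOrder α] [LinearOrder β]

@[simp]
lemma intervalGraph_adj {a b : V → α} {i j : V} :
    (intervalGraph a b).Adj i j ↔ i ≠ j ∧ a i ≤ b j ∧ a j ≤ b i :=
  Iff.rfl

lemma intervalGraph_comp_orderEmbedding (e : α ↪o β) (a b : V → α) :
    intervalGraph (e ∘ a) (e ∘ b) = intervalGraph a b := by
  ext; simp

lemma intervalGraph_comp {f : W → V} (hf : Injective f) (a b : V → α) :
    intervalGraph (a ∘ f) (b ∘ f) = (intervalGraph a b).comap f := by
  ext; simp [hf.ne_iff]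

lemma exists_orderEmbedding_fin_comp [Fintype V] (c : V → α) :
    ∃ m ≤ Fintype.card V, ∃ (e : Fin m ↪o α) (c' : V → Fin m), e ∘ c' = c := by
  classical
  let S := Finset.univ.image c
  have hc : ∀ v, c v ∈ Set.range (S.orderEmbOfFin rfl) := by simp [S]
  choose c' hc' using hc
  exact ⟨S.card, Finset.card_image_le, S.orderEmbOfFin rfl, c', funext hc'⟩

end IntervalGraph

lemma isIntervalGraph_iff {n : ℕ} {G : SimpleGraph (Fin n)} :
    IsIntervalGraph G ↔ ∃ a b : Fin n → ℝ, a ≤ b ∧ G = intervalGraph a b := by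
  refine exists₂_congr fun a b => and_congr_right fun hab => ?_
  have hmeet (i j : Fin n) :
      (Set.Icc (a i) (b i) ∩ Set.Icc (a j) (b j)).Nonempty ↔ a i ≤ b j ∧ a j ≤ b i := by
    simp [Set.Icc_inter_Icc, hab i, hab j, and_comm]
  simp only [hmeet, SimpleGraph.ext_iff, funext_iff, eq_iff_iff, intervalGraph_adj]
  refine forall₂_congr fun i j => ?_
  rcases eq_or_ne i j with rfl | hij <;> simp [*]

lemma isIntervalGraph_intervalGraph_nat {n : ℕ} {a b : Fin n → ℕ} (hab : a ≤ b) :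
    IsIntervalGraph (intervalGraph a b) :=
  isIntervalGraph_iff.2 ⟨_, _, fun i => Nat.cast_le.2 (hab i),
    (intervalGraph_comp_orderEmbedding Nat.castOrderEmbedding a b).symm⟩

lemma IsIntervalGraph.comap_equiv {n : ℕ} {G : SimpleGraph (Fin n)} (hG : IsIntervalGraph G)
    (σ : Equiv.Perm (Fin n)) : IsIntervalGraph (G.comap σ) := by
  obtain ⟨a, b, hab, rfl⟩ := isIntervalGraph_iff.1 hG
  exact isIntervalGraph_iff.2
    ⟨a ∘ σ, b ∘ σ, fun i => hab _, (intervalGraph_comp σ.injective a b).symm⟩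

lemma IsIntervalGraph.exists_fin_endpoints {n : ℕ} {G : SimpleGraph (Fin n)}
    (hG : IsIntervalGraph G) : ∃ a b : Fin n → Fin (2 * n), G = intervalGraph a b := by
  obtain ⟨a, b, -, rfl⟩ := isIntervalGraph_iff.1 hG
  obtain ⟨m, hm, e, c, hc⟩ := exists_orderEmbedding_fin_comp (Sum.elim a b)
  have hm' : m ≤ 2 * n := by simpa [two_mul] using hm
  let ψ := Fin.castLEOrderEmb hm'
  refine ⟨ψ ∘ c ∘ Sum.inl, ψ ∘ c ∘ Sum.inr, ?_⟩
  rw [intervalGraph_comp_orderEmbedding, ← intervalGraph_comp_orderEmbedding e]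
  simp only [← comp_assoc, hc, Sum.elim_comp_inl, Sum.elim_comp_inr]

lemma exists_perm_comp_eq_of_map_univ_eq {ι α : Type*} [Fintype ι] {f g : ι → α}
    (h : Finset.univ.val.map f = Finset.univ.val.map g) : ∃ σ : Equiv.Perm ι, g ∘ σ = f := by
  classical
  have hfib : ∀ a, Fintype.card {i // f i = a} = Fintype.card {i // g i = a} := fun a => by
    simpa [Fintype.card_subtype, Multiset.count_map, eq_comm, Finset.card, Finset.filter_val] using
      congrArg (Multiset.count a) h
  exact ⟨Equiv.ofFiberEquiv fun a => Fintype.equivOfCardEq (hfib a),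
    funext (Equiv.ofFiberEquiv_map _)⟩

lemma intervalGraphCount_le_choose (n : ℕ) :
    intervalGraphCount n ≤ (2 * n * (2 * n) + n - 1).choose n := by
  classical
  have hrep (q : Quotient (intervalIsoSetoid n)) :
      ∃ a b : Fin n → Fin (2 * n), q.out.1 = intervalGraph a b :=
    q.out.2.exists_fin_endpoints
  choose a b hab using hrep
  let endpoints (q : Quotient (intervalIsoSetoid n)) : Sym (Fin (2 * n) × Fin (2 * n)) n :=
    ⟨Finset.univ.val.map fun i => (a q i, b q i), by simp⟩
  have hinj : Injective endpoints := by
    intro q r h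
    have hmap : Finset.univ.val.map (fun i => (a q i, b q i))
        = Finset.univ.val.map (fun i => (a r i, b r i)) := congrArg Subtype.val h
    obtain ⟨σ, hσ⟩ := exists_perm_comp_eq_of_map_univ_eq hmap
    have ha : a r ∘ σ = a q := funext fun i => congrArg Prod.fst (congrFun hσ i)
    have hb : b r ∘ σ = b q := funext fun i => congrArg Prod.snd (congrFun hσ i)
    refine Quotient.out_equiv_out.mp ⟨?_⟩
    rw [hab q, hab r, ← ha, ← hb, intervalGraph_comp σ.injective]
    exact SimpleGraph.Iso.comap σ _
  calc intervalGraphCount n ≤ Nat.card (Sym (Fin (2 * n) × Fin (2 * n)) n) :=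
        Nat.card_le_card_of_injective endpoints hinj
    _ = (2 * n * (2 * n) + n - 1).choose n := by
        rw [Nat.card_eq_fintype_card, Sym.card_sym_eq_choose]; simp

lemma card_isIntervalGraph_le (n : ℕ) :
    Nat.card {G : SimpleGraph (Fin n) // IsIntervalGraph G} ≤ intervalGraphCount n * n ! := by
  let relabel (p : Quotient (intervalIsoSetoid n) × Equiv.Perm (Fin n)) :
      {G : SimpleGraph (Fin n) // IsIntervalGraph G} :=
    ⟨p.1.out.1.comap p.2, p.1.out.2.comap_equiv p.2⟩
  have hsurj : Surjective relabel := by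
    intro H
    obtain ⟨e⟩ : Nonempty ((⟦H⟧ : Quotient (intervalIsoSetoid n)).out.1 ≃g H.1) :=
      Quotient.mk_out (s := intervalIsoSetoid n) H
    exact ⟨(⟦H⟧, e.symm.toEquiv), Subtype.ext (SimpleGraph.Embedding.comap_eq e.symm.toEmbedding)⟩
  calc Nat.card {G : SimpleGraph (Fin n) // IsIntervalGraph G}
      ≤ Nat.card (Quotient (intervalIsoSetoid n) × Equiv.Perm (Fin n)) :=
        Nat.card_le_card_of_surjective relabel hsurj
    _ = intervalGraphCount n * n ! := by
        rw [Nat.card_prod, Nat.card_perm, Nat.card_fin]; rfl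

def probeEndpoints {ι : Type*} (k : ℕ) (f : ι → Fin k × Fin k) : Fin k ⊕ Fin k ⊕ ι → ℕ × ℕ
  | .inl c => (c, c)
  | .inr (.inl c) => (k + c, k + c)
  | .inr (.inr j) => ((f j).1, k + (f j).2)

def probeGraph {ι : Type*} (k : ℕ) (f : ι → Fin k × Fin k) : SimpleGraph (Fin k ⊕ Fin k ⊕ ι) :=
  intervalGraph (Prod.fst ∘ probeEndpoints k f) (Prod.snd ∘ probeEndpoints k f)

section ProbeGraph

variable {ι : Type*} {k : ℕ} (f : ι → Fin k × Fin k) (j : ι) (c : Fin k)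

lemma probeEndpoints_fst_le_snd (x : Fin k ⊕ Fin k ⊕ ι) :
    (probeEndpoints k f x).1 ≤ (probeEndpoints k f x).2 := by
  rcases x with c | c | j <;> simp only [probeEndpoints] <;> omega

lemma probeGraph_adj_inl : (probeGraph k f).Adj (.inr (.inr j)) (.inl c) ↔ (f j).1 ≤ c := by
  simp only [probeGraph, intervalGraph_adj, ne_eq, reduceCtorEq, not_false_eq_true, true_and,
    comp_apply, probeEndpoints, Fin.le_def]
  omega

lemma probeGraph_adj_inr_inl :
    (probeGraph k f).Adj (.inr (.inr j)) (.inr (.inl c)) ↔ c ≤ (f j).2 := by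
  simp only [probeGraph, intervalGraph_adj, ne_eq, Sum.inr.injEq, reduceCtorEq,
    not_false_eq_true, true_and, comp_apply, probeEndpoints, Fin.le_def]
  omega

lemma probeGraph_injective : Injective (probeGraph (ι := ι) k) := by
  intro f g h
  funext j
  refine Prod.ext (eq_of_forall_ge_iff fun c => ?_) (eq_of_forall_le_iff fun c => ?_)
  · rw [← probeGraph_adj_inl, ← probeGraph_adj_inl, h]
  · rw [← probeGraph_adj_inr_inl, ← probeGraph_adj_inr_inl, h]

end ProbeGraph

lemma pow_le_card_isIntervalGraph {n k : ℕ} (hkn : 2 * k ≤ n) :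
    (k * k) ^ (n - 2 * k) ≤ Nat.card {G : SimpleGraph (Fin n) // IsIntervalGraph G} := by
  let e : Fin n ≃ Fin k ⊕ Fin k ⊕ Fin (n - 2 * k) := Fintype.equivOfCardEq (by simp; omega)
  have hinterval (f : Fin (n - 2 * k) → Fin k × Fin k) :
      IsIntervalGraph ((probeGraph k f).comap e) := by
    rw [probeGraph, ← intervalGraph_comp e.injective]
    exact isIntervalGraph_intervalGraph_nat fun i => probeEndpoints_fst_le_snd f (e i)
  let family (f : Fin (n - 2 * k) → Fin k × Fin k) :
      {G : SimpleGraph (Fin n) // IsIntervalGraph G} :=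
    ⟨(probeGraph k f).comap e, hinterval f⟩
  have hinj : Injective family := fun f g h =>
    probeGraph_injective (e.symm.simpleGraph.injective (congrArg Subtype.val h))
  calc (k * k) ^ (n - 2 * k) = Nat.card (Fin (n - 2 * k) → Fin k × Fin k) := by simp
    _ ≤ _ := Nat.card_le_card_of_injective family hinj

lemma intervalGraphCount_le_pow (n : ℕ) : (intervalGraphCount n : ℝ) ≤ (5 * exp 1 * n) ^ n := by
  have hbase : 2 * n * (2 * n) + n - 1 ≤ 5 * n ^ 2 := by
    have := Nat.sub_le (2 * n * (2 * n) + n) 1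
    nlinarith
  calc (intervalGraphCount n : ℝ) ≤ ((2 * n * (2 * n) + n - 1).choose n : ℕ) := by
        exact_mod_cast intervalGraphCount_le_choose n
    _ ≤ ((2 * n * (2 * n) + n - 1 : ℕ) : ℝ) ^ n / n ! := Nat.choose_le_pow_div _ _
    _ ≤ (5 * n ^ 2 : ℝ) ^ n / n ! := by gcongr; exact_mod_cast hbase
    _ = (5 * n) ^ n * (n ^ n / n !) := by ring
    _ ≤ (5 * n) ^ n * exp 1 ^ n := by
        gcongr
        rw [exp_one_pow]
        exact pow_div_factorial_le_exp _ n.cast_nonneg n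
    _ = (5 * exp 1 * n) ^ n := by ring

lemma intervalGraphCount_pos (n : ℕ) : 0 < intervalGraphCount n :=
  have : Nonempty (Quotient (intervalIsoSetoid n)) :=
    ⟨⟦⟨intervalGraph Fin.val Fin.val, isIntervalGraph_intervalGraph_nat le_rfl⟩⟧⟩
  Nat.card_pos

lemma log_intervalGraphCount_div_le {n : ℕ} (hn : 2 ≤ n) :
    log (intervalGraphCount n) / (n * log n) ≤ 1 + log (5 * exp 1) / log n := by
  have hn0 : (0 : ℝ) < n := by positivity
  have hlog : 0 < log (n : ℝ) := log_pos (by exact_mod_cast hn)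
  have hbound : log (intervalGraphCount n) ≤ n * log n + n * log (5 * exp 1) := by
    calc log (intervalGraphCount n) ≤ log ((5 * exp 1 * n) ^ n) :=
          log_le_log (by exact_mod_cast intervalGraphCount_pos n) (intervalGraphCount_le_pow n)
      _ = n * log n + n * log (5 * exp 1) := by
          rw [log_pow, log_mul (by positivity) hn0.ne']; ring
  rw [div_le_iff₀ (by positivity)]
  calc log (intervalGraphCount n) ≤ n * log n + n * log (5 * exp 1) := hbound
    _ = (1 + log (5 * exp 1) / log n) * (n * log n) := by field_simp

lemma log_intervalGraphCount_ge {n k : ℕ} (hk : 1 ≤ k) (hkn : 2 * k ≤ n) :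
    2 * (n - 2 * k) * log k - n * log n ≤ log (intervalGraphCount n) := by
  have hcount : (k * k) ^ (n - 2 * k) ≤ intervalGraphCount n * n ^ n :=
    (pow_le_card_isIntervalGraph hkn).trans <|
      (card_isIntervalGraph_le n).trans (Nat.mul_le_mul_left _ n.factorial_le_pow)
  have hn : n ≠ 0 := by omega
  have hlog := log_le_log (by positivity) (by exact_mod_cast hcount :
    ((k * k) ^ (n - 2 * k) : ℝ) ≤ intervalGraphCount n * n ^ n)
  have hcount_pos : (intervalGraphCount n : ℝ) ≠ 0 := by
    exact_mod_cast (intervalGraphCount_pos n).ne'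
  rw [log_pow, log_mul (by positivity) (by positivity), log_mul hcount_pos (by positivity),
    log_pow, Nat.cast_sub hkn] at hlog
  push_cast at hlog
  linarith

lemma le_log_intervalGraphCount_div {n : ℕ} (hn : 4 ≤ log n) :
    2 * (1 - 2 / log n - 2 / n) * (1 - log (log n) / log n) - 1
      ≤ log (intervalGraphCount n) / (n * log n) := by
  set L := log (n : ℝ)
  have hn0 : (0 : ℝ) < n := Nat.cast_pos.2 (Nat.pos_of_ne_zero fun h => by norm_num [L, h] at hn)
  have hL : 0 < L := by linarith
  set k := ⌈n / L⌉₊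
  have hk_ge : n / L ≤ k := Nat.le_ceil _
  have hk_lt : k < n / L + 1 := Nat.ceil_lt_add_one (by positivity)
  have hkn : 2 * k ≤ n := by
    have : (n : ℝ) / L ≤ n / 4 := div_le_div_of_nonneg_left hn0.le (by norm_num) hn
    have : (5 : ℝ) ≤ n := by linarith [log_le_sub_one_of_pos hn0]
    exact_mod_cast (by linarith : (2 * k : ℝ) ≤ n)
  have hlogk : L - log L ≤ log k :=
    calc L - log L = log (n / L) := (log_div hn0.ne' hL.ne').symm
      _ ≤ log k := log_le_log (by positivity) hk_ge
  have hbound : 2 * (n - 2 * (n / L) - 2) * (L - log L) - n * L ≤ log (intervalGraphCount n) :=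
    calc 2 * (n - 2 * (n / L) - 2) * (L - log L) - n * L ≤ 2 * (n - 2 * k) * log k - n * L := by
          have hkn' : (2 * k : ℝ) ≤ n := by exact_mod_cast hkn
          gcongr ?_ - _
          exact mul_le_mul (by linarith) hlogk (by linarith [log_le_sub_one_of_pos hL])
            (by linarith)
      _ ≤ log (intervalGraphCount n) :=
          log_intervalGraphCount_ge (Nat.ceil_pos.2 (by positivity)) hkn
  rw [le_div_iff₀ (by positivity)]
  calc _ = 2 * (n - 2 * (n / L) - 2) * (L - log L) - n * L := by field_simp
    _ ≤ _ := hbound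

theorem log_interval_graph_count_asymptotic :
    Filter.Tendsto (fun n : ℕ => Real.log (intervalGraphCount n) / ((n : ℝ) * Real.log n))
      Filter.atTop (nhds 1) := by
  have hlog : Tendsto (fun n : ℕ => log (n : ℝ)) atTop atTop :=
    tendsto_log_atTop.comp tendsto_natCast_atTop_atTop
  have hloglog : Tendsto (fun n : ℕ => log (log n) / log n) atTop (𝓝 0) := by
    have h := tendsto_pow_log_div_mul_add_atTop 1 0 1 one_ne_zero
    simp only [pow_one, one_mul, add_zero] at h
    exact h.comp hlog
  have hlower : Tendsto (fun n : ℕ => 2 * (1 - 2 / log n - 2 / n) * (1 - log (log n) / log n) - 1)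
      atTop (𝓝 1) := by
    convert (((tendsto_const_nhds.sub (tendsto_const_nhds.div_atTop hlog)).sub
      (tendsto_const_nhds.div_atTop tendsto_natCast_atTop_atTop)).const_mul 2).mul
      (tendsto_const_nhds.sub hloglog) |>.sub_const 1 using 2
    norm_num
  have hupper : Tendsto (fun n : ℕ => 1 + log (5 * exp 1) / log n) atTop (𝓝 1) := by
    simpa using tendsto_const_nhds.add (tendsto_const_nhds.div_atTop hlog)
  exact tendsto_of_tendsto_of_tendsto_of_le_of_le' hlower hupper
    ((hlog.eventually_ge_atTop 4).mono fun n => le_log_intervalGraphCount_div)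
    ((eventually_ge_atTop 2).mono fun n => log_intervalGraphCount_div_le)
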